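/- Let H be a real Hilbert space, k ≥ 1 and m ≥ 1 integers, and let M be an m-dimensional C^k-submanifold of H that is connected as a topological subspace of H. Let d ∈ {0, …, m} be such that fl M(h) = d for every h ∈ M. Let g₀, h₀ ∈ M, let L, L' ⊆ H be d-dimensional linear subspaces, and let U, U' ⊆ H be open neighborhoods of g₀ and h₀, respectively, such that L ⊆ T_h M for all h ∈ U ∩ M and L' ⊆ T_h M for all h ∈ U' ∩ M. Then L = L'. -/

import Mathlib

open Set Pointwise

noncomputable section

/-- `φ : V → U ∩ M` is a parametrization of class `C^k` of `M` around `h₀`: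
`U` is an open neighborhood of `h₀`, `V` is open, `φ ∈ C^k(V;H)`,
`φ : V → U ∩ M` is a homeomorphism, and `Dφ(y)` is injective for all `y ∈ V`. -/
structure IsParametrization {E H : Type*} [NormedAddCommGroup E] [NormedSpace ℝ E]
    [NormedAddCommGroup H] [NormedSpace ℝ H] (k : ℕ) (M : Set H) (h₀ : H)
    (V : Set E) (φ : E → H) (U : Set H) : Prop where
  isOpen_U : IsOpen U
  h₀_mem_U : h₀ ∈ U
  isOpen_V : IsOpen V
  contDiffOn : ContDiffOn ℝ k φ V
  image_eq : φ '' V = U ∩ M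
  injOn : Set.InjOn φ V
  exists_contInv : ∃ ψ : H → E, ContinuousOn ψ (U ∩ M) ∧ ∀ y ∈ V, ψ (φ y) = y
  fderiv_injective : ∀ y ∈ V, Function.Injective (fderiv ℝ φ y)

/-- `M` is an `m`-dimensional `C^k`-submanifold of `H`: `M` is nonempty and every
point of `M` admits a parametrization with domain an open subset of `ℝ^m`. -/
def IsSubmanifold {H : Type*} [NormedAddCommGroup H] [NormedSpace ℝ H]
    (k m : ℕ) (M : Set H) : Prop :=
  M.Nonempty ∧ ∀ h₀ ∈ M, ∃ (V : Set (EuclideanSpace ℝ (Fin m)))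
    (φ : EuclideanSpace ℝ (Fin m) → H) (U : Set H), IsParametrization k M h₀ V φ U

/-- The tangent space `T_h M`: the image of `Dφ(φ⁻¹(h))` for a parametrization `φ`
of `M` around `h`. -/
def TangentSet {H : Type*} [NormedAddCommGroup H] [NormedSpace ℝ H]
    (k m : ℕ) (M : Set H) (h : H) : Set H :=
  {v | ∃ (V : Set (EuclideanSpace ℝ (Fin m))) (φ : EuclideanSpace ℝ (Fin m) → H)
    (U : Set H), IsParametrization k M h V φ U ∧
      ∃ y ∈ V, φ y = h ∧ v ∈ Set.range (fderiv ℝ φ y)}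

/-- `M` has flatness at least `d` at `h₀`: some `d`-dimensional subspace `L ⊆ H` is
contained in all tangent spaces `T_h M` for `h ∈ U ∩ M`, `U` an open neighborhood of `h₀`. -/
def FlatAt {H : Type*} [NormedAddCommGroup H] [NormedSpace ℝ H]
    (k m : ℕ) (M : Set H) (h₀ : H) (d : ℕ) : Prop :=
  ∃ (L : Submodule ℝ H) (U : Set H), Module.finrank ℝ L = d ∧ IsOpen U ∧ h₀ ∈ U ∧
    ∀ h ∈ U ∩ M, (L : Set H) ⊆ TangentSet k m M h

/-- The flatness `fl M(h₀)` of `M` at `h₀`: the largest `d ∈ {0,…,m}` such that `M` has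
flatness at least `d` at `h₀`. -/
def flatnessAt {H : Type*} [NormedAddCommGroup H] [NormedSpace ℝ H]
    (k m : ℕ) (M : Set H) (h₀ : H) : ℕ :=
  sSup {d | d ≤ m ∧ FlatAt k m M h₀ d}

/-- The flatness `fl M` of `M`: the minimum of `fl M(h)` over `h ∈ M`. -/
def flatness {H : Type*} [NormedAddCommGroup H] [NormedSpace ℝ H]
    (k m : ℕ) (M : Set H) : ℕ :=
  sInf (flatnessAt k m M '' M)

section helpers

open Filter Topology

variable {H : Type*} [NormedAddCommGroup H] [InnerProductSpace ℝ H] [CompleteSpace H]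

/-- Independence of the tangent space on the parametrization (one inclusion). -/
lemma range_fderiv_subset {k m : ℕ} (hk : 1 ≤ k) {M : Set H} {h : H}
    {V₁ : Set (EuclideanSpace ℝ (Fin m))} {φ₁ : EuclideanSpace ℝ (Fin m) → H} {U₁ : Set H}
    (p₁ : IsParametrization k M h V₁ φ₁ U₁) {y₁ : EuclideanSpace ℝ (Fin m)}
    (hy₁ : y₁ ∈ V₁) (hφ₁ : φ₁ y₁ = h)
    {V₂ : Set (EuclideanSpace ℝ (Fin m))} {φ₂ : EuclideanSpace ℝ (Fin m) → H} {U₂ : Set H}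
    (p₂ : IsParametrization k M h V₂ φ₂ U₂) {y₂ : EuclideanSpace ℝ (Fin m)}
    (hy₂ : y₂ ∈ V₂) (hφ₂ : φ₂ y₂ = h) :
    Set.range (fderiv ℝ φ₁ y₁) ⊆ Set.range (fderiv ℝ φ₂ y₂) := by
  have hk' : (1 : WithTop ℕ∞) ≤ (k : WithTop ℕ∞) := by exact_mod_cast hk
  -- differentiability facts
  have hφ₁ca : ContDiffAt ℝ k φ₁ y₁ := p₁.contDiffOn.contDiffAt (p₁.isOpen_V.mem_nhds hy₁)
  have hφ₂ca : ContDiffAt ℝ k φ₂ y₂ := p₂.contDiffOn.contDiffAt (p₂.isOpen_V.mem_nhds hy₂)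
  have hφ₁d : DifferentiableAt ℝ φ₁ y₁ := hφ₁ca.differentiableAt (by positivity)
  have hφ₂d : DifferentiableAt ℝ φ₂ y₂ := hφ₂ca.differentiableAt (by positivity)
  set f₂' := fderiv ℝ φ₂ y₂ with hf₂'def
  have hinj₂ : Function.Injective f₂' := p₂.fderiv_injective y₂ hy₂
  -- a continuous linear left inverse `P` of `f₂'`
  set W : Submodule ℝ H :=
    LinearMap.range (f₂' : EuclideanSpace ℝ (Fin m) →ₗ[ℝ] H) with hWdef
  haveI hWfd : FiniteDimensional ℝ W := inferInstance
  haveI : CompleteSpace W := FiniteDimensional.complete ℝ _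
  let pr : H →L[ℝ] W := W.orthogonalProjectionOnto
  let e : EuclideanSpace ℝ (Fin m) ≃ₗ[ℝ] W :=
    LinearEquiv.ofInjective (f₂' : EuclideanSpace ℝ (Fin m) →ₗ[ℝ] H) hinj₂
  let e' := e.toContinuousLinearEquiv
  let P : H →L[ℝ] EuclideanSpace ℝ (Fin m) := (e'.symm : W →L[ℝ] _).comp pr
  have hP : ∀ x, P (f₂' x) = x := by
    intro x
    have hmem : f₂' x ∈ W := LinearMap.mem_range_self _ x
    have h2 : pr (f₂' x) = ⟨f₂' x, hmem⟩ :=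
      Submodule.orthogonalProjectionOnto_mem_subspace_eq_self (⟨f₂' x, hmem⟩ : W)
    have h3 : e' x = ⟨f₂' x, hmem⟩ := by
      apply Subtype.ext
      exact LinearEquiv.ofInjective_apply
        (f := (f₂' : EuclideanSpace ℝ (Fin m) →ₗ[ℝ] H)) (h := hinj₂) x
    show e'.symm (pr (f₂' x)) = x
    rw [h2, ← h3, e'.symm_apply_apply]
  -- `g = P ∘ φ₂` has invertible strict derivative at `y₂`
  set g : EuclideanSpace ℝ (Fin m) → EuclideanSpace ℝ (Fin m) := fun x => P (φ₂ x) with hgdef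
  set eqv : EuclideanSpace ℝ (Fin m) ≃L[ℝ] EuclideanSpace ℝ (Fin m) :=
    ContinuousLinearEquiv.refl ℝ _ with heqv
  have hcomp_id : P.comp f₂' = (eqv : EuclideanSpace ℝ (Fin m) →L[ℝ] EuclideanSpace ℝ (Fin m)) :=
    ContinuousLinearMap.ext fun x => hP x
  have hgstrict : HasStrictFDerivAt g
      (eqv : EuclideanSpace ℝ (Fin m) →L[ℝ] EuclideanSpace ℝ (Fin m)) y₂ := by
    rw [← hcomp_id]
    exact P.hasStrictFDerivAt.comp y₂ (hφ₂ca.hasStrictFDerivAt (by positivity))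
  set ginv := hgstrict.localInverse g eqv y₂ with hginvdef
  have hleft : ∀ᶠ z in 𝓝 y₂, ginv (g z) = z := hgstrict.eventually_left_inverse
  have hginv_strict : HasStrictFDerivAt ginv
      ((eqv.symm : EuclideanSpace ℝ (Fin m) →L[ℝ] EuclideanSpace ℝ (Fin m))) (g y₂) :=
    hgstrict.to_localInverse
  -- the transition map `σ = ψ₂ ∘ φ₁`
  obtain ⟨ψ₂, hψc, hψeq⟩ := p₂.exists_contInv
  set σ : EuclideanSpace ℝ (Fin m) → EuclideanSpace ℝ (Fin m) := fun x => ψ₂ (φ₁ x) with hσdef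
  set s : Set (EuclideanSpace ℝ (Fin m)) := V₁ ∩ φ₁ ⁻¹' U₂ with hsdef
  have hs_open : IsOpen s := p₁.contDiffOn.continuousOn.isOpen_inter_preimage p₁.isOpen_V p₂.isOpen_U
  have hy₁s : y₁ ∈ s := ⟨hy₁, by rw [Set.mem_preimage, hφ₁]; exact p₂.h₀_mem_U⟩
  have hmemUM : ∀ x ∈ s, φ₁ x ∈ U₂ ∩ M := by
    intro x hx
    refine ⟨hx.2, ?_⟩
    have : φ₁ x ∈ φ₁ '' V₁ := Set.mem_image_of_mem _ hx.1
    rw [p₁.image_eq] at this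
    exact this.2
  have hσ_prop : ∀ x ∈ s, σ x ∈ V₂ ∧ φ₂ (σ x) = φ₁ x := by
    intro x hx
    have h1 : φ₁ x ∈ φ₂ '' V₂ := by rw [p₂.image_eq]; exact hmemUM x hx
    obtain ⟨y, hy, hyx⟩ := h1
    have : σ x = y := by rw [hσdef]; simp only; rw [← hyx, hψeq y hy]
    rw [this, hyx]
    exact ⟨hy, rfl⟩
  have hhUM : h ∈ U₂ ∩ M := by
    rw [← p₂.image_eq]
    exact ⟨y₂, hy₂, hφ₂⟩
  have hψh : ψ₂ h = y₂ := by rw [← hφ₂]; exact hψeq y₂ hy₂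
  have hσ_tendsto : Tendsto σ (𝓝 y₁) (𝓝 y₂) := by
    have hφ₁t : Tendsto φ₁ (𝓝 y₁) (𝓝[U₂ ∩ M] h) := by
      refine tendsto_nhdsWithin_iff.mpr ⟨?_, ?_⟩
      · have := hφ₁ca.continuousAt.tendsto
        rwa [hφ₁] at this
      · filter_upwards [hs_open.mem_nhds hy₁s] with x hx using hmemUM x hx
    have := (hψc h hhUM).tendsto.comp hφ₁t
    rwa [hψh] at this
  -- `τ = ginv ∘ P ∘ φ₁` agrees with `σ` near `y₁`
  set τ : EuclideanSpace ℝ (Fin m) → EuclideanSpace ℝ (Fin m) := fun x => ginv (P (φ₁ x)) with hτdef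
  have hτσ : τ =ᶠ[𝓝 y₁] σ := by
    filter_upwards [hs_open.mem_nhds hy₁s, hσ_tendsto.eventually hleft] with x hx hlx
    have hgσ : g (σ x) = P (φ₁ x) := by
      rw [hgdef]; simp only; rw [(hσ_prop x hx).2]
    rw [hτdef]; simp only; rw [← hgσ, hlx]
  have hσy₁ : σ y₁ = y₂ := by rw [hσdef]; simp only; rw [hφ₁, hψh]
  have hτy₁ : τ y₁ = y₂ := hτσ.eq_of_nhds.trans hσy₁
  have hgy₂ : g y₂ = P (φ₁ y₁) := by rw [hgdef]; simp only; rw [hφ₂, hφ₁]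
  have hτdiff : DifferentiableAt ℝ τ y₁ := by
    have h1 : DifferentiableAt ℝ ginv (P (φ₁ y₁)) := by
      rw [← hgy₂]; exact hginv_strict.differentiableAt
    have h2 : DifferentiableAt ℝ (fun x => P (φ₁ x)) y₁ := P.differentiableAt.comp y₁ hφ₁d
    exact h1.comp y₁ h2
  -- `φ₂ ∘ τ = φ₁` near `y₁`
  have hfeq : (fun x => φ₂ (τ x)) =ᶠ[𝓝 y₁] φ₁ := by
    filter_upwards [hτσ, hs_open.mem_nhds hy₁s] with x hx1 hx2
    rw [hx1, (hσ_prop x hx2).2]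
  have hφ₂τd : DifferentiableAt ℝ φ₂ (τ y₁) := by rw [hτy₁]; exact hφ₂d
  have hchain : fderiv ℝ φ₁ y₁ = f₂'.comp (fderiv ℝ τ y₁) := by
    have h1 : fderiv ℝ (fun x => φ₂ (τ x)) y₁ = fderiv ℝ φ₁ y₁ := hfeq.fderiv_eq
    have h2 : fderiv ℝ (φ₂ ∘ τ) y₁ = (fderiv ℝ φ₂ (τ y₁)).comp (fderiv ℝ τ y₁) :=
      fderiv_comp y₁ hφ₂τd hτdiff
    rw [← h1]
    rw [show (fun x => φ₂ (τ x)) = φ₂ ∘ τ from rfl, h2, hτy₁, hf₂'def]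
  rintro v ⟨u, rfl⟩
  rw [hchain]
  exact ⟨fderiv ℝ τ y₁ u, rfl⟩

/-- The tangent set is a submodule of dimension `m`. -/
lemma exists_tangent_submodule {k m : ℕ} (hk : 1 ≤ k) {M : Set H} (hM : IsSubmanifold k m M)
    {x : H} (hx : x ∈ M) :
    ∃ T : Submodule ℝ H, FiniteDimensional ℝ T ∧ Module.finrank ℝ T = m ∧
      TangentSet k m M x = (T : Set H) := by
  obtain ⟨V, φ, U, p⟩ := hM.2 x hx
  have hxUM : x ∈ φ '' V := by rw [p.image_eq]; exact ⟨p.h₀_mem_U, hx⟩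
  obtain ⟨y, hy, hφy⟩ := hxUM
  have hinj : Function.Injective (fderiv ℝ φ y) := p.fderiv_injective y hy
  refine ⟨LinearMap.range ((fderiv ℝ φ y : EuclideanSpace ℝ (Fin m) →ₗ[ℝ] H)), inferInstance, ?_, ?_⟩
  · rw [LinearMap.finrank_range_of_inj hinj, finrank_euclideanSpace_fin]
  · apply Set.Subset.antisymm
    · rintro v ⟨V', φ', U', p', y', hy', hφ', hv⟩
      obtain ⟨u, hu⟩ := range_fderiv_subset hk p' hy' hφ' p hy hφy hv
      exact ⟨u, hu⟩
    · rintro v ⟨u, hu⟩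
      exact ⟨V, φ, U, p, y, hy, hφy, u, hu⟩

/-- The flatness at a point of `M` is attained. -/
lemma flatAt_flatnessAt {k m : ℕ} {M : Set H} (hM : IsSubmanifold k m M) {x : H} (hx : x ∈ M) :
    FlatAt k m M x (flatnessAt k m M x) := by
  have hzero : (0 : ℕ) ∈ {d | d ≤ m ∧ FlatAt k m M x d} := by
    refine ⟨Nat.zero_le m, ⊥, Set.univ, finrank_bot ℝ H, isOpen_univ, Set.mem_univ x, ?_⟩
    intro h hh v hv
    rw [Submodule.bot_coe, Set.mem_singleton_iff] at hv
    subst hv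
    obtain ⟨V, φ, U, p⟩ := hM.2 h hh.2
    have : h ∈ φ '' V := by rw [p.image_eq]; exact ⟨p.h₀_mem_U, hh.2⟩
    obtain ⟨y, hy, hφy⟩ := this
    exact ⟨V, φ, U, p, y, hy, hφy, 0, map_zero _⟩
  have hbdd : BddAbove {d | d ≤ m ∧ FlatAt k m M x d} := ⟨m, fun n hn => hn.1⟩
  exact (Nat.sSup_mem ⟨0, hzero⟩ hbdd).2

/-- Uniqueness of the local flat subspace. -/
lemma unique_flat {k m : ℕ} (hk : 1 ≤ k) {M : Set H} (hM : IsSubmanifold k m M)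
    {x : H} (hx : x ∈ M) {d : ℕ} (hfl : flatnessAt k m M x = d)
    (L₁ L₂ : Submodule ℝ H)
    (h1 : Module.finrank ℝ L₁ = d) (h2 : Module.finrank ℝ L₂ = d)
    (U₁ U₂ : Set H) (hU₁ : IsOpen U₁) (hU₂ : IsOpen U₂) (hx1 : x ∈ U₁) (hx2 : x ∈ U₂)
    (hs1 : ∀ h ∈ U₁ ∩ M, (L₁ : Set H) ⊆ TangentSet k m M h)
    (hs2 : ∀ h ∈ U₂ ∩ M, (L₂ : Set H) ⊆ TangentSet k m M h) :
    L₁ = L₂ := by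
  obtain ⟨T, hTfd, hTrank, hTeq⟩ := exists_tangent_submodule hk hM hx
  haveI := hTfd
  have hL₁T : L₁ ≤ T := by
    intro v hv
    have := hs1 x ⟨hx1, hx⟩ hv
    rwa [hTeq] at this
  have hL₂T : L₂ ≤ T := by
    intro v hv
    have := hs2 x ⟨hx2, hx⟩ hv
    rwa [hTeq] at this
  haveI : FiniteDimensional ℝ L₁ := Submodule.finiteDimensional_of_le hL₁T
  haveI : FiniteDimensional ℝ L₂ := Submodule.finiteDimensional_of_le hL₂T
  by_contra hne
  have hnle : ¬ L₂ ≤ L₁ := by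
    intro hle
    exact hne (Submodule.eq_of_le_of_finrank_eq hle (h2.trans h1.symm)).symm
  obtain ⟨v, hvL₂, hvL₁⟩ := SetLike.not_le_iff_exists.mp hnle
  have hv0 : v ≠ 0 := fun h0 => hvL₁ (h0 ▸ L₁.zero_mem)
  set L'' : Submodule ℝ H := L₁ ⊔ Submodule.span ℝ {v} with hL''def
  have hinf : L₁ ⊓ Submodule.span ℝ {v} = ⊥ := by
    rw [eq_bot_iff]
    rintro w hw
    have hwL : w ∈ L₁ := hw.1
    have hws : w ∈ Submodule.span ℝ {v} := hw.2
    rw [Submodule.mem_span_singleton] at hws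
    obtain ⟨c, rfl⟩ := hws
    rcases eq_or_ne c 0 with rfl | hc
    · simp
    · exact absurd (by simpa [hc] using L₁.smul_mem c⁻¹ hwL : v ∈ L₁) hvL₁
  have hrank'' : Module.finrank ℝ L'' = d + 1 := by
    have hh := Submodule.finrank_sup_add_finrank_inf_eq L₁ (Submodule.span ℝ {v})
    rw [hinf, finrank_bot, finrank_span_singleton hv0, h1, ← hL''def] at hh
    omega
  have hle_sub : ∀ h ∈ (U₁ ∩ U₂) ∩ M, (L'' : Set H) ⊆ TangentSet k m M h := by
    intro h hh
    obtain ⟨Th, hThfd, hThrank, hTheq⟩ := exists_tangent_submodule hk hM hh.2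
    have hle : L'' ≤ Th := by
      apply sup_le
      · intro w hw
        have := hs1 h ⟨hh.1.1, hh.2⟩ hw
        rwa [hTheq] at this
      · rw [Submodule.span_le, Set.singleton_subset_iff]
        have := hs2 h ⟨hh.1.2, hh.2⟩ hvL₂
        rwa [hTheq] at this
    intro w hw
    rw [hTheq]
    exact hle hw
  have hle_m : d + 1 ≤ m := by
    have hle : L'' ≤ T := by
      apply sup_le hL₁T
      rw [Submodule.span_le, Set.singleton_subset_iff]
      exact hL₂T hvL₂
    have := Submodule.finrank_mono hle
    rwa [hrank'', hTrank] at this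
  have hmem : d + 1 ∈ {n | n ≤ m ∧ FlatAt k m M x n} :=
    ⟨hle_m, L'', U₁ ∩ U₂, hrank'', hU₁.inter hU₂, ⟨hx1, hx2⟩, hle_sub⟩
  have hbdd : BddAbove {n | n ≤ m ∧ FlatAt k m M x n} := ⟨m, fun n hn => hn.1⟩
  have := le_csSup hbdd hmem
  rw [show sSup {n | n ≤ m ∧ FlatAt k m M x n} = flatnessAt k m M x from rfl, hfl] at this
  omega

end helpers

/-- on a connected submanifold of constant flatness `d`, the local
`d`-dimensional tangent subspaces at any two points coincide. -/
theorem stmt8 {H : Type*} [NormedAddCommGroup H] [InnerProductSpace ℝ H] [CompleteSpace H]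
    (k m : ℕ) (hk : 1 ≤ k) (hm : 1 ≤ m) (M : Set H) (hM : IsSubmanifold k m M)
    (hconn : IsConnected M) (d : ℕ) (hd : d ≤ m)
    (hflat : ∀ h ∈ M, flatnessAt k m M h = d)
    (g₀ h₀ : H) (hg₀ : g₀ ∈ M) (hh₀ : h₀ ∈ M)
    (L L' : Submodule ℝ H) [FiniteDimensional ℝ L] [FiniteDimensional ℝ L']
    (hdL : Module.finrank ℝ L = d) (hdL' : Module.finrank ℝ L' = d)
    (U U' : Set H) (hU : IsOpen U) (hU' : IsOpen U') (hg₀U : g₀ ∈ U) (hh₀U' : h₀ ∈ U')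
    (ht : ∀ h ∈ U ∩ M, (L : Set H) ⊆ TangentSet k m M h)
    (ht' : ∀ h ∈ U' ∩ M, (L' : Set H) ⊆ TangentSet k m M h) :
    L = L' := by
  classical
  haveI : ConnectedSpace M := Subtype.connectedSpace hconn
  -- the collection of compatible open sets for `L`
  set C : Set (Set H) := {W | IsOpen W ∧ ∀ g ∈ W ∩ M, (L : Set H) ⊆ TangentSet k m M g} with hC
  set O : Set H := ⋃₀ C with hO
  have hOopen : IsOpen O := isOpen_sUnion fun W hW => hW.1
  set A : Set M := Subtype.val ⁻¹' O with hA
  have hAopen : IsOpen A := hOopen.preimage continuous_subtype_val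
  have hGood : ∀ x : M, x ∈ A ↔ ∃ W : Set H, IsOpen W ∧ (x : H) ∈ W ∧
      ∀ g ∈ W ∩ M, (L : Set H) ⊆ TangentSet k m M g := by
    intro x
    constructor
    · rintro ⟨W, hWC, hxW⟩
      exact ⟨W, hWC.1, hxW, hWC.2⟩
    · rintro ⟨W, hWo, hxW, hWt⟩
      exact ⟨W, ⟨hWo, hWt⟩, hxW⟩
  have hAclosed : IsClosed A := by
    rw [← isOpen_compl_iff]
    rw [isOpen_iff_forall_mem_open]
    intro x hx
    obtain ⟨Lx, Ux, hLxrank, hUxopen, hxUx, hLxt⟩ := flatAt_flatnessAt hM x.2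
    rw [hflat x.1 x.2] at hLxrank
    refine ⟨Subtype.val ⁻¹' Ux, ?_, (hUxopen.preimage continuous_subtype_val), hxUx⟩
    intro z hz
    intro hzA
    obtain ⟨W, hWo, hzW, hWt⟩ := (hGood z).1 hzA
    have hLLx : L = Lx :=
      unique_flat hk hM z.2 (hflat z.1 z.2) L Lx hdL hLxrank W Ux hWo hUxopen hzW hz hWt hLxt
    apply hx
    refine (hGood x).2 ⟨Ux, hUxopen, hxUx, ?_⟩
    rw [hLLx]
    exact hLxt
  have hAne : A.Nonempty := ⟨⟨g₀, hg₀⟩, (hGood _).2 ⟨U, hU, hg₀U, ht⟩⟩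
  have hAuniv : A = Set.univ := IsClopen.eq_univ ⟨hAclosed, hAopen⟩ hAne
  have hh₀A : (⟨h₀, hh₀⟩ : M) ∈ A := hAuniv ▸ Set.mem_univ _
  obtain ⟨W, hWo, hh₀W, hWt⟩ := (hGood _).1 hh₀A
  exact unique_flat hk hM hh₀ (hflat h₀ hh₀) L L' hdL hdL' W U' hWo hU' hh₀W hh₀U' hWt ht'
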